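/- arXiv:2502.04665 — 10 statements merged into one kernel-verified Lean document; each statement's English description precedes it below -/
import Mathlib

section
/- In the category of finitely generated projective modules over the ring Z/p² (p prime), the pair (⟨p⟩, ⟨p⟩), where ⟨p⟩ is the ideal of morphisms generated by multiplication by p on Z/p², is an ideal torsion pair; in particular there exists an ideal torsion pair (I,J) with I ∩ J ≠ 0 and (I ∩ J)² = 0. -/
open CategoryTheory Limits ZeroObject

universe v u

variable {C : Type u} [Category.{v} C] [Preadditive C]

abbrev MorClass (C : Type u) [Category.{v} C] := ∀ ⦃X Y : C⦄, (X ⟶ Y) → Prop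

structure IsMorIdeal (I : MorClass C) : Prop where
  zero_mem : ∀ (X Y : C), I (0 : X ⟶ Y)
  add_mem : ∀ ⦃X Y : C⦄ ⦃f g : X ⟶ Y⦄, I f → I g → I (f + g)
  comp_mem_left : ∀ ⦃X Y Z : C⦄ (f : X ⟶ Y) ⦃g : Y ⟶ Z⦄, I g → I (f ≫ g)
  comp_mem_right : ∀ ⦃X Y Z : C⦄ ⦃f : X ⟶ Y⦄ (g : Y ⟶ Z), I f → I (f ≫ g)

/-- Left annihilator: morphisms `j` with `i ≫ j = 0` for every composable `i ∈ I`. -/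
def leftAnn (I : MorClass C) : MorClass C :=
  fun B _Y j => ∀ ⦃A : C⦄ (i : A ⟶ B), I i → i ≫ j = 0

/-- Right annihilator: morphisms `i` with `i ≫ j = 0` for every composable `j ∈ J`. -/
def rightAnn (J : MorClass C) : MorClass C :=
  fun _X A i => ∀ ⦃B : C⦄ (j : A ⟶ B), J j → i ≫ j = 0

/-- Right Hom-orthogonal class `I^⊥`: morphisms `j` with `Hom(i,j) = 0` for all `i ∈ I`. -/
def perpRight (I : MorClass C) : MorClass C :=
  fun B _Y j => ∀ ⦃X A : C⦄ (i : X ⟶ A), I i → ∀ x : A ⟶ B, i ≫ x ≫ j = 0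

/-- Left Hom-orthogonal class `^⊥J`. -/
def perpLeft (J : MorClass C) : MorClass C :=
  fun _X A i => ∀ ⦃B Y : C⦄ (j : B ⟶ Y), J j → ∀ x : A ⟶ B, i ≫ x ≫ j = 0

def sumIdeal (I J : MorClass C) : MorClass C :=
  fun X Y f => ∃ g h : X ⟶ Y, I g ∧ J h ∧ f = g + h

/-- Product ideal `I∘J` (apply a member of `J` first, then a member of `I`);
`prodIdeal I₁ I₂` is the ideal `I₁I₂` of composites `i₁ ∘ i₂`. -/
def prodIdeal (I J : MorClass C) : MorClass C :=
  fun X Z f => ∃ (Y : C) (g : X ⟶ Y) (h : Y ⟶ Z), J g ∧ I h ∧ f = g ≫ h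

def IsWeakKernel {X Y Z : C} (k : X ⟶ Y) (c : Y ⟶ Z) : Prop :=
  k ≫ c = 0 ∧ ∀ ⦃W : C⦄ (k' : W ⟶ Y), k' ≫ c = 0 → ∃ t : W ⟶ X, t ≫ k = k'

def IsWeakCokernel {X Y Z : C} (k : X ⟶ Y) (c : Y ⟶ Z) : Prop :=
  k ≫ c = 0 ∧ ∀ ⦃W : C⦄ (c' : Y ⟶ W), k ≫ c' = 0 → ∃ t : Z ⟶ W, c ≫ t = c'


/-- The ideal generated by a class `S` of morphisms: the intersection of all ideals
containing `S`. -/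
def genBy (S : MorClass C) : MorClass C :=
  fun _X _Y f => ∀ I : MorClass C, IsMorIdeal I →
    (∀ ⦃A B : C⦄ (g : A ⟶ B), S g → I g) → I f

/-- The class consisting of the single morphism `m` (up to equality of objects). -/
def singleMor {A B : C} (m : A ⟶ B) : MorClass C :=
  fun X Y f => ∃ (hX : X = A) (hY : Y = B), f = eqToHom hX ≫ m ≫ eqToHom hY.symm

/-- The category of finitely generated projective modules over `ZMod (p^2)`. -/
abbrev ProjCat (p : ℕ) : Type 1 :=
  ObjectProperty.FullSubcategory (fun M : ModuleCat (ZMod (p ^ 2)) =>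
    Module.Projective (ZMod (p ^ 2)) M ∧ Module.Finite (ZMod (p ^ 2)) M)

/-- The ring `ZMod (p^2)` as an object of `ProjCat p`. -/
def Robj (p : ℕ) : ProjCat p :=
  ⟨ModuleCat.of (ZMod (p ^ 2)) (ZMod (p ^ 2)),
    ⟨inferInstanceAs (Module.Projective (ZMod (p ^ 2)) (ZMod (p ^ 2))),
     inferInstanceAs (Module.Finite (ZMod (p ^ 2)) (ZMod (p ^ 2)))⟩⟩

/-- The ideal `⟨p⟩` of `ProjCat p` generated by multiplication by `p` on `ZMod (p^2)`. -/
def pIdeal (p : ℕ) : MorClass (ProjCat p) :=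
  genBy (singleMor (p • 𝟙 (Robj p)))

section Aux

open Preadditive

lemma morIdeal_sum_mem {I : MorClass C} (hI : IsMorIdeal I) {X Y : C}
    {ι : Type*} (s : Finset ι) (f : ι → (X ⟶ Y)) (h : ∀ i ∈ s, I (f i)) :
    I (∑ i ∈ s, f i) := by
  classical
  induction s using Finset.induction with
  | empty => simpa using hI.zero_mem X Y
  | insert _ _ hx ih =>
    rw [Finset.sum_insert hx]
    exact hI.add_mem (h _ (Finset.mem_insert_self _ _))
      (ih fun i hi => h i (Finset.mem_insert_of_mem hi))

/-- The free module `R^n` as an object of `ProjCat p`. -/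
def Fobj (p n : ℕ) : ProjCat p :=
  ⟨ModuleCat.of (ZMod (p ^ 2)) (Fin n → ZMod (p ^ 2)),
    ⟨inferInstanceAs (Module.Projective (ZMod (p ^ 2)) (Fin n → ZMod (p ^ 2))),
     inferInstanceAs (Module.Finite (ZMod (p ^ 2)) (Fin n → ZMod (p ^ 2)))⟩⟩

/-- Morphisms in `ProjCat p` are linear maps. -/
def toLin {p : ℕ} {X Y : ProjCat p} (f : X ⟶ Y) :
    ↑X.obj →ₗ[ZMod (p ^ 2)] ↑Y.obj := f.hom.hom

def toLinHom {p : ℕ} (X Y : ProjCat p) :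
    (X ⟶ Y) →+ (↑X.obj →ₗ[ZMod (p ^ 2)] ↑Y.obj) where
  toFun := toLin
  map_zero' := rfl
  map_add' _ _ := rfl

lemma hom_ext' {p : ℕ} {X Y : ProjCat p} {f g : X ⟶ Y} (h : toLin f = toLin g) :
    f = g := InducedCategory.hom_ext (ModuleCat.hom_ext h)

lemma toLin_comp {p : ℕ} {X Y Z : ProjCat p} (f : X ⟶ Y) (g : Y ⟶ Z) :
    toLin (f ≫ g) = (toLin g).comp (toLin f) := rfl

lemma toLin_nsmul {p n : ℕ} {X Y : ProjCat p} (f : X ⟶ Y) :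
    toLin (n • f) = n • toLin f := rfl

lemma toLin_id {p : ℕ} (X : ProjCat p) : toLin (𝟙 X) = LinearMap.id := rfl

lemma zmod_p_mul (p : ℕ) (hp : p.Prime) (a : ZMod (p ^ 2)) (ha : (p : ZMod (p ^ 2)) * a = 0) :
    ∃ b : ZMod (p ^ 2), a = (p : ZMod (p ^ 2)) * b := by
  haveI : NeZero (p ^ 2) := ⟨pow_ne_zero 2 hp.ne_zero⟩
  have hv : ((p * a.val : ℕ) : ZMod (p ^ 2)) = 0 := by
    push_cast
    rw [ZMod.natCast_val, ZMod.cast_id, ha]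
  rw [ZMod.natCast_eq_zero_iff] at hv
  have hv2 : p * p ∣ p * a.val := by rw [← pow_two]; exact hv
  have hd : p ∣ a.val := (mul_dvd_mul_iff_left (a := p)
    (by exact_mod_cast hp.ne_zero)).mp hv2
  refine ⟨((a.val / p : ℕ) : ZMod (p ^ 2)), ?_⟩
  have h2 : ((p * (a.val / p) : ℕ) : ZMod (p ^ 2)) = a := by
    rw [Nat.mul_div_cancel' hd, ZMod.natCast_zmod_val]
  exact_mod_cast h2.symm

lemma pIdeal_iff {p : ℕ} {X Y : ProjCat p} (f : X ⟶ Y) :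
    pIdeal p f ↔ ∃ g : X ⟶ Y, f = p • g := by
  constructor
  · intro hf
    refine hf (fun X Y f => ∃ g : X ⟶ Y, f = p • g) ?_ ?_
    · refine ⟨fun X Y => ⟨0, by simp⟩, ?_, ?_, ?_⟩
      · rintro X Y f g ⟨a, rfl⟩ ⟨b, rfl⟩; exact ⟨a + b, by rw [smul_add]⟩
      · rintro X Y Z f g ⟨a, rfl⟩; exact ⟨f ≫ a, by rw [comp_nsmul]⟩
      · rintro X Y Z f g ⟨a, rfl⟩; exact ⟨a ≫ g, by rw [nsmul_comp]⟩
    · rintro A B g ⟨hA, hB, rfl⟩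
      subst hA; subst hB
      exact ⟨eqToHom rfl ≫ 𝟙 _ ≫ eqToHom rfl, by simp [comp_nsmul, nsmul_comp]⟩
  · rintro ⟨g, rfl⟩
    intro I hI hS
    haveI := X.property.1
    haveI := X.property.2
    obtain ⟨n, fs, sec, _, _, hcomp⟩ :=
      Module.Finite.exists_comp_eq_id_of_projective (ZMod (p ^ 2)) X.obj
    let FX : ProjCat p := Fobj p n
    let fsm : FX ⟶ X := ObjectProperty.homMk (ModuleCat.ofHom fs)
    let secm : X ⟶ FX := ObjectProperty.homMk (ModuleCat.ofHom sec)
    let pr : Fin n → (FX ⟶ Robj p) := fun i => ObjectProperty.homMk (ModuleCat.ofHom (LinearMap.proj i))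
    let si : Fin n → (Robj p ⟶ FX) :=
      fun i => ObjectProperty.homMk (ModuleCat.ofHom (LinearMap.single (ZMod (p ^ 2)) (fun _ : Fin n => ZMod (p ^ 2)) i))
    let F : Fin n → (X ⟶ Y) :=
      fun i => (secm ≫ pr i) ≫ ((p • 𝟙 (Robj p)) ≫ (si i ≫ (fsm ≫ g)))
    have key : ((p : ℕ) • g : X ⟶ Y) = ∑ i : Fin n, F i := by
      apply hom_ext'
      have hsum : toLin (∑ i : Fin n, F i) = ∑ i : Fin n, toLin (F i) := by
        exact map_sum (toLinHom X Y) F Finset.univ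
      rw [hsum]
      refine LinearMap.ext fun x => ?_
      rw [LinearMap.sum_apply]
      have hterm : ∀ i : Fin n,
          toLin (F i) x = toLin g (fs (Pi.single i (p • (sec x i)))) := by
        intro i
        rfl
      rw [Finset.sum_congr rfl (fun i _ => hterm i)]
      have h1 : ∑ i : Fin n, toLin g (fs (Pi.single i (p • sec x i)))
          = toLin g (fs (∑ i : Fin n, Pi.single i (p • sec x i))) := by
        rw [map_sum, map_sum]
      rw [h1]
      have h2 : (∑ i : Fin n, Pi.single i (p • sec x i)) = p • sec x := by
        have h3 := Finset.univ_sum_single ((p : ℕ) • sec x)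
        simpa using h3
      rw [h2, map_nsmul, map_nsmul]
      have h4 : fs (sec x) = x := LinearMap.congr_fun hcomp x
      rw [h4]
      rfl
    rw [key]
    refine morIdeal_sum_mem hI _ F fun i _ => ?_
    show I ((secm ≫ pr i) ≫ ((p • 𝟙 (Robj p)) ≫ (si i ≫ (fsm ≫ g))))
    refine hI.comp_mem_left _ (hI.comp_mem_right _ ?_)
    exact hS _ ⟨rfl, rfl, by simp⟩

/-- Core lemma: if `p • f = 0` then `f` is divisible by `p`. -/
lemma core_div {p : ℕ} (hp : p.Prime) {X Y : ProjCat p} (f : X ⟶ Y)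
    (hf : (p : ℕ) • f = 0) : ∃ g : X ⟶ Y, f = p • g := by
  haveI := X.property.1
  haveI := Y.property.1
  haveI := Y.property.2
  obtain ⟨n, fs, sec, _, _, hcomp⟩ :=
    Module.Finite.exists_comp_eq_id_of_projective (ZMod (p ^ 2)) Y.obj
  set R := ZMod (p ^ 2)
  have hf' : (p : ℕ) • toLin f = 0 := by
    rw [← toLin_nsmul, hf]; rfl
  let h : ↑X.obj →ₗ[R] (Fin n → R) := sec ∘ₗ toLin f
  have hph : ∀ x, (p : ℕ) • h x = 0 := by
    intro x
    have h5 : (p : ℕ) • toLin f x = 0 := by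
      have := LinearMap.congr_fun hf' x
      simpa using this
    show (p : ℕ) • sec (toLin f x) = 0
    rw [← map_nsmul, h5, map_zero]
  let μ : (Fin n → R) →ₗ[R] (Fin n → R) := (p : ℕ) • LinearMap.id
  have hrange : ∀ x, h x ∈ LinearMap.range μ := by
    intro x
    have hcoord : ∀ i, ∃ b : R, h x i = (p : R) * b := by
      intro i
      apply zmod_p_mul p hp
      have h6 : ((p : ℕ) • h x) i = 0 := by rw [hph x]; rfl
      calc (p : R) * h x i = (p : ℕ) • (h x i) := by rw [nsmul_eq_mul]
        _ = ((p : ℕ) • h x) i := rfl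
        _ = 0 := h6
    choose b hb using hcoord
    refine ⟨b, ?_⟩
    funext i
    show (p : ℕ) • b i = h x i
    rw [nsmul_eq_mul, ← hb]
  have hμ' : Function.Surjective μ.rangeRestrict := LinearMap.surjective_rangeRestrict μ
  let h' : ↑X.obj →ₗ[R] LinearMap.range μ := h.codRestrict _ hrange
  obtain ⟨g0, hg0⟩ := Module.projective_lifting_property μ.rangeRestrict h' hμ'
  have hμg : ∀ x, μ (g0 x) = h x := by
    intro x
    exact congrArg Subtype.val (LinearMap.congr_fun hg0 x)
  let g0m : X ⟶ Fobj p n := ObjectProperty.homMk (ModuleCat.ofHom g0)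
  let fsm : Fobj p n ⟶ Y := ObjectProperty.homMk (ModuleCat.ofHom fs)
  refine ⟨g0m ≫ fsm, ?_⟩
  apply hom_ext'
  refine LinearMap.ext fun x => ?_
  rw [toLin_nsmul, toLin_comp]
  show toLin f x = (p : ℕ) • (fs (g0 x))
  have h1 : fs (sec (toLin f x)) = toLin f x := LinearMap.congr_fun hcomp _
  have h2 : μ (g0 x) = sec (toLin f x) := hμg x
  have h3 : μ (g0 x) = (p : ℕ) • g0 x := rfl
  calc toLin f x = fs (sec (toLin f x)) := h1.symm
    _ = fs ((p : ℕ) • g0 x) := by rw [← h3, h2]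
    _ = (p : ℕ) • fs (g0 x) := by rw [map_nsmul]

lemma psq_zero {p : ℕ} {X Y : ProjCat p} (f : X ⟶ Y) : (p * p : ℕ) • f = 0 := by
  apply hom_ext'
  rw [toLin_nsmul]
  refine LinearMap.ext fun x => ?_
  rw [LinearMap.smul_apply]
  have h0 : ((p * p : ℕ) : ZMod (p ^ 2)) = 0 := by
    rw [← pow_two]; exact_mod_cast ZMod.natCast_self (p ^ 2)
  show (p * p : ℕ) • toLin f x = (0 : ↑X.obj →ₗ[ZMod (p ^ 2)] ↑Y.obj) x
  rw [← Nat.cast_smul_eq_nsmul (ZMod (p ^ 2)), h0, zero_smul]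
  rfl

end Aux
/-- `(⟨p⟩, ⟨p⟩)` is an ideal torsion pair in `proj-ℤ/p²`; in particular there is an ideal
torsion pair `(I, J)` with `I ∩ J ≠ 0` and `(I ∩ J)² = 0`. -/
theorem stmt5 (p : ℕ) (hp : p.Prime) :
    ((∀ ⦃X Y : ProjCat p⦄ (f : X ⟶ Y), pIdeal p f ↔ rightAnn (pIdeal p) f) ∧
     (∀ ⦃X Y : ProjCat p⦄ (f : X ⟶ Y), pIdeal p f ↔ leftAnn (pIdeal p) f)) ∧
    (∃ (X Y : ProjCat p) (f : X ⟶ Y), pIdeal p f ∧ f ≠ 0) ∧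
    (∀ ⦃X Z : ProjCat p⦄ (f : X ⟶ Z), prodIdeal (pIdeal p) (pIdeal p) f → f = 0) := by
  have hsmul : ∀ ⦃X Y : ProjCat p⦄ (g : X ⟶ Y), pIdeal p ((p : ℕ) • g) :=
    fun X Y g => (pIdeal_iff _).mpr ⟨g, rfl⟩
  have hzero : ∀ ⦃X Y Z : ProjCat p⦄ (g : X ⟶ Y) (h : Y ⟶ Z),
      ((p : ℕ) • g) ≫ ((p : ℕ) • h) = 0 := by
    intro X Y Z g h
    rw [Preadditive.nsmul_comp, Preadditive.comp_nsmul, smul_smul]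
    exact psq_zero (g ≫ h)
  refine ⟨⟨fun X Y f => ?_, fun X Y f => ?_⟩, ?_, ?_⟩
  · constructor
    · intro hf B j hj
      obtain ⟨g, rfl⟩ := (pIdeal_iff f).mp hf
      obtain ⟨h, rfl⟩ := (pIdeal_iff j).mp hj
      exact hzero g h
    · intro hf
      have := hf ((p : ℕ) • 𝟙 Y) (hsmul (𝟙 Y))
      rw [Preadditive.comp_nsmul, Category.comp_id] at this
      exact (pIdeal_iff f).mpr (core_div hp f this)
  · constructor
    · intro hf A i hi
      obtain ⟨g, rfl⟩ := (pIdeal_iff f).mp hf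
      obtain ⟨h, rfl⟩ := (pIdeal_iff i).mp hi
      exact hzero h g
    · intro hf
      have := hf ((p : ℕ) • 𝟙 X) (hsmul (𝟙 X))
      rw [Preadditive.nsmul_comp, Category.id_comp] at this
      exact (pIdeal_iff f).mpr (core_div hp f this)
  · refine ⟨Robj p, Robj p, (p : ℕ) • 𝟙 (Robj p), hsmul (𝟙 (Robj p)), ?_⟩
    intro h0
    have happ : toLin ((p : ℕ) • 𝟙 (Robj p)) (1 : ZMod (p ^ 2)) = 0 := by
      rw [h0]; rfl
    have h1 : ((p : ℕ) : ZMod (p ^ 2)) = 0 := by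
      have h2 : (p : ℕ) • (1 : ZMod (p ^ 2)) = 0 := happ
      simpa [nsmul_eq_mul] using h2
    haveI : NeZero (p ^ 2) := ⟨pow_ne_zero 2 hp.ne_zero⟩
    rw [ZMod.natCast_eq_zero_iff] at h1
    have hle : p ^ 2 ≤ p := Nat.le_of_dvd hp.pos h1
    have hgt : p < p ^ 2 := by
      have h3 := hp.one_lt
      calc p = p * 1 := (mul_one p).symm
        _ < p * p := by exact Nat.mul_lt_mul_of_le_of_lt (le_refl p) h3 hp.pos
        _ = p ^ 2 := (sq p).symm
    omega
  · rintro X Z f ⟨Y, g, h, hg, hh, rfl⟩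
    obtain ⟨g', rfl⟩ := (pIdeal_iff g).mp hg
    obtain ⟨h', rfl⟩ := (pIdeal_iff h).mp hh
    exact hzero g' h'
end

section
/- Let I₁, I₂ be ideals of an additive category A. Suppose there is a commutative diagram with morphisms k: X→Y, g: Y→Z where k is a weak kernel of g, together with a²: F₁→Y, a¹: Y→F₂, j₁ = g∘a²: F₁→Z with j₁ ∈ ℓ(I₁), and j₂ = a¹∘k: X→F₂ with j₂ ∈ ℓ(I₂). Then the composite a = a¹∘a²: F₁→F₂ belongs to ℓ(I₁I₂). -/
open CategoryTheory Limits ZeroObject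

universe v u

variable {C : Type u} [Category.{v} C] [Preadditive C]

/-- Given a weak kernel `k` of `g`, morphisms `a² : F₁ ⟶ Y`, `a¹ : Y ⟶ F₂` with
`j₁ = g ∘ a² ∈ ℓ(I₁)` and `j₂ = a¹ ∘ k ∈ ℓ(I₂)`, the composite `a = a¹ ∘ a²`
belongs to `ℓ(I₁I₂)`. -/
theorem stmt6 (I₁ I₂ : MorClass C) (h₁ : IsMorIdeal I₁) (h₂ : IsMorIdeal I₂)
    {X Y Z F₁ F₂ : C} (k : X ⟶ Y) (g : Y ⟶ Z) (hk : IsWeakKernel k g)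
    (a2 : F₁ ⟶ Y) (a1 : Y ⟶ F₂)
    (hj₁ : leftAnn I₁ (a2 ≫ g)) (hj₂ : leftAnn I₂ (k ≫ a1)) :
    leftAnn (prodIdeal I₁ I₂) (a2 ≫ a1) := by
  rintro A i ⟨B, g', h', hg', hh', rfl⟩
  have h0 : (h' ≫ a2) ≫ g = 0 := by
    have := hj₁ h' hh'
    simpa using this
  obtain ⟨t, ht⟩ := hk.2 _ h0
  have := hj₂ (g' ≫ t) (h₂.comp_mem_right t hg')
  calc (g' ≫ h') ≫ a2 ≫ a1 = (g' ≫ t) ≫ k ≫ a1 := by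
        simp only [Category.assoc]; congr 1; rw [← Category.assoc, ← ht, Category.assoc]
    _ = 0 := this
end

section
/- Let (I,J) be an ideal torsion pair in a weak kernel-cokernel category and let T --i--> X --j--> F be a weak conflation. Then the following are equivalent: (1) i is an I-precover of X; (2) i ∈ I and j ∈ J; (3) j is a J-preenvelope of X; (4) i is an I-precover and j is a J-preenvelope of X. -/
open CategoryTheory Limits ZeroObject

universe v u

variable {C : Type u} [Category.{v} C] [Preadditive C]

variable (C) in
/-- A weak kernel-cokernel structure: a class of distinguished weak kernel-cokernel pairs
("weak conflations") closed under isomorphism and finite biproducts and containing the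
split pairs `A → A → 0` and `0 → A → A`. -/
structure WKCStruct [HasZeroObject C] [HasBinaryBiproducts C] where
  conf : ∀ ⦃X Y Z : C⦄, (X ⟶ Y) → (Y ⟶ Z) → Prop
  weak_kernel : ∀ ⦃X Y Z : C⦄ ⦃k : X ⟶ Y⦄ ⦃c : Y ⟶ Z⦄, conf k c → IsWeakKernel k c
  weak_cokernel : ∀ ⦃X Y Z : C⦄ ⦃k : X ⟶ Y⦄ ⦃c : Y ⟶ Z⦄, conf k c → IsWeakCokernel k c
  conf_iso : ∀ ⦃X Y Z X' Y' Z' : C⦄ ⦃k : X ⟶ Y⦄ ⦃c : Y ⟶ Z⦄ ⦃k' : X' ⟶ Y'⦄ ⦃c' : Y' ⟶ Z'⦄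
      (x : X ≅ X') (y : Y ≅ Y') (z : Z ≅ Z'), conf k c →
      k ≫ y.hom = x.hom ≫ k' → c ≫ z.hom = y.hom ≫ c' → conf k' c'
  conf_biprod : ∀ ⦃X Y Z X' Y' Z' : C⦄ ⦃k : X ⟶ Y⦄ ⦃c : Y ⟶ Z⦄ ⦃k' : X' ⟶ Y'⦄ ⦃c' : Y' ⟶ Z'⦄,
      conf k c → conf k' c' → conf (biprod.map k k') (biprod.map c c')
  conf_id_zero : ∀ X : C, conf (𝟙 X) (0 : X ⟶ 0)
  conf_zero_id : ∀ X : C, conf (0 : (0 : C) ⟶ X) (𝟙 X)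

variable [HasZeroObject C] [HasBinaryBiproducts C]

def WeakInflation (W : WKCStruct C) {X Y : C} (k : X ⟶ Y) : Prop :=
  ∃ (Z : C) (c : Y ⟶ Z), W.conf k c

def WeakDeflation (W : WKCStruct C) {Y Z : C} (c : Y ⟶ Z) : Prop :=
  ∃ (X : C) (k : X ⟶ Y), W.conf k c

def IsPrecover (I : MorClass C) {T X : C} (i : T ⟶ X) : Prop :=
  I i ∧ ∀ ⦃T' : C⦄ (i' : T' ⟶ X), I i' → ∃ f : T' ⟶ T, f ≫ i = i'

def IsPreenvelope (J : MorClass C) {X F : C} (j : X ⟶ F) : Prop :=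
  J j ∧ ∀ ⦃F' : C⦄ (j' : X ⟶ F'), J j' → ∃ g : F ⟶ F', j ≫ g = j'

def IsIdealTorsionPair (I J : MorClass C) : Prop :=
  (∀ ⦃X Y : C⦄ (f : X ⟶ Y), I f ↔ rightAnn J f) ∧
  (∀ ⦃X Y : C⦄ (f : X ⟶ Y), J f ↔ leftAnn I f)

def HomSpecialPrecovering (W : WKCStruct C) (I : MorClass C) : Prop :=
  ∀ X : C, ∃ (T : C) (i : T ⟶ X), IsPrecover I i ∧ WeakInflation W i

def HomSpecialPreenveloping (W : WKCStruct C) (J : MorClass C) : Prop :=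
  ∀ X : C, ∃ (F : C) (j : X ⟶ F), IsPreenvelope J j ∧ WeakDeflation W j

/-- A complete ideal torsion pair. -/
def CompleteITP (W : WKCStruct C) (I J : MorClass C) : Prop :=
  IsIdealTorsionPair I J ∧ HomSpecialPrecovering W I ∧ HomSpecialPreenveloping W J

/-- The weak extension ideal `I ⋄ J`: weak extensions `i ⋆ j` of `j ∈ J` by `i ∈ I`. -/
def diamondIdeal (W : WKCStruct C) (I J : MorClass C) : MorClass C :=
  fun F T e => ∃ (X Y Z : C) (k : X ⟶ Y) (c : Y ⟶ Z) (e2 : F ⟶ Y) (e1 : Y ⟶ T),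
    W.conf k c ∧ e = e2 ≫ e1 ∧ I (k ≫ e1) ∧ J (e2 ≫ c)

structure IsWeakExact (W : WKCStruct C) : Prop where
  infl_comp : ∀ ⦃X Y Z : C⦄ ⦃k : X ⟶ Y⦄ ⦃k' : Y ⟶ Z⦄,
      WeakInflation W k → WeakInflation W k' → WeakInflation W (k ≫ k')
  defl_comp : ∀ ⦃X Y Z : C⦄ ⦃c : X ⟶ Y⦄ ⦃c' : Y ⟶ Z⦄,
      WeakDeflation W c → WeakDeflation W c' → WeakDeflation W (c ≫ c')
  five₁ : ∀ ⦃X Y Z X' Y' Z' : C⦄ ⦃k : X ⟶ Y⦄ ⦃c : Y ⟶ Z⦄ ⦃k' : X' ⟶ Y'⦄ ⦃c' : Y' ⟶ Z'⦄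
      (f : X ⟶ X') (g : Y ⟶ Y') (h : Z ⟶ Z'), W.conf k c → W.conf k' c' →
      k ≫ g = f ≫ k' → c ≫ h = g ≫ c' → IsIso f → IsIso g → IsIso h
  five₂ : ∀ ⦃X Y Z X' Y' Z' : C⦄ ⦃k : X ⟶ Y⦄ ⦃c : Y ⟶ Z⦄ ⦃k' : X' ⟶ Y'⦄ ⦃c' : Y' ⟶ Z'⦄
      (f : X ⟶ X') (g : Y ⟶ Y') (h : Z ⟶ Z'), W.conf k c → W.conf k' c' →
      k ≫ g = f ≫ k' → c ≫ h = g ≫ c' → IsIso f → IsIso h → IsIso g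
  five₃ : ∀ ⦃X Y Z X' Y' Z' : C⦄ ⦃k : X ⟶ Y⦄ ⦃c : Y ⟶ Z⦄ ⦃k' : X' ⟶ Y'⦄ ⦃c' : Y' ⟶ Z'⦄
      (f : X ⟶ X') (g : Y ⟶ Y') (h : Z ⟶ Z'), W.conf k c → W.conf k' c' →
      k ≫ g = f ≫ k' → c ≫ h = g ≫ c' → IsIso g → IsIso h → IsIso f

def IsCover (I : MorClass C) {T X : C} (i : T ⟶ X) : Prop :=
  IsPrecover I i ∧ ∀ f : T ⟶ T, f ≫ i = i → IsIso f

def IsEnvelope (J : MorClass C) {X F : C} (j : X ⟶ F) : Prop :=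
  IsPreenvelope J j ∧ ∀ g : F ⟶ F, j ≫ g = j → IsIso g

def Covering (I : MorClass C) : Prop := ∀ X : C, ∃ (T : C) (i : T ⟶ X), IsCover I i

def Enveloping (J : MorClass C) : Prop := ∀ X : C, ∃ (F : C) (j : X ⟶ F), IsEnvelope J j


/-- Salce's Lemma, 0-dimensional version: for an ideal torsion pair `(I, J)` and a
weak conflation `T --i--> X --j--> F`, the following are equivalent:
(1) `i` is an `I`-precover of `X`; (2) `i ∈ I` and `j ∈ J`;
(3) `j` is a `J`-preenvelope of `X`; (4) both (1) and (3). -/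
theorem stmt8 (W : WKCStruct C) (I J : MorClass C)
    (hIJ : IsIdealTorsionPair I J) {T X F : C} (i : T ⟶ X) (j : X ⟶ F)
    (hconf : W.conf i j) :
    (IsPrecover I i ↔ (I i ∧ J j)) ∧
    ((I i ∧ J j) ↔ IsPreenvelope J j) ∧
    ((I i ∧ J j) ↔ (IsPrecover I i ∧ IsPreenvelope J j)) := by
  obtain ⟨hij, hker⟩ := W.weak_kernel hconf
  obtain ⟨_, hcoker⟩ := W.weak_cokernel hconf
  have h21 : (I i ∧ J j) → IsPrecover I i := by
    rintro ⟨hi, hj⟩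
    refine ⟨hi, fun T' i' hi' => ?_⟩
    have : i' ≫ j = 0 := (hIJ.2 j).mp hj i' hi'
    exact hker i' this
  have h23 : (I i ∧ J j) → IsPreenvelope J j := by
    rintro ⟨hi, hj⟩
    refine ⟨hj, fun F' j' hj' => ?_⟩
    have : i ≫ j' = 0 := (hIJ.1 i).mp hi j' hj'
    exact hcoker j' this
  have h12 : IsPrecover I i → (I i ∧ J j) := by
    rintro ⟨hi, hfac⟩
    refine ⟨hi, (hIJ.2 j).mpr fun A i' hi' => ?_⟩
    obtain ⟨f, hf⟩ := hfac i' hi'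
    rw [← hf, Category.assoc, hij, comp_zero]
  have h32 : IsPreenvelope J j → (I i ∧ J j) := by
    rintro ⟨hj, hfac⟩
    refine ⟨(hIJ.1 i).mpr fun B j' hj' => ?_, hj⟩
    obtain ⟨g, hg⟩ := hfac j' hj'
    rw [← hg, ← Category.assoc, hij, zero_comp]
  exact ⟨⟨h12, h21⟩, ⟨h23, h32⟩, fun h => ⟨h21 h, h23 h⟩, fun h => h12 h.1⟩
end

section
/- If (I,J) is an ideal torsion pair in a weak kernel-cokernel category, then I is Hom-special precovering (every object has an I-precover that is a weak inflation) if and only if J is Hom-special preenveloping (every object has a J-preenvelope that is a weak deflation). -/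
open CategoryTheory Limits ZeroObject

universe v u

variable {C : Type u} [Category.{v} C] [Preadditive C]

variable [HasZeroObject C] [HasBinaryBiproducts C]

/-- For an ideal torsion pair `(I, J)` in a weak kernel-cokernel category, `I` is
Hom-special precovering iff `J` is Hom-special preenveloping. -/
theorem stmt9 (W : WKCStruct C) (I J : MorClass C)
    (hIJ : IsIdealTorsionPair I J) :
    HomSpecialPrecovering W I ↔ HomSpecialPreenveloping W J := by
  obtain ⟨hI, hJ⟩ := hIJ
  constructor
  · intro h X
    obtain ⟨T, i, ⟨hIi, hpre⟩, F, c, hconf⟩ := h X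
    refine ⟨F, c, ⟨?_, ?_⟩, ⟨T, i, hconf⟩⟩
    · rw [hJ]
      intro A i' hi'
      obtain ⟨f, hf⟩ := hpre i' hi'
      rw [← hf, Category.assoc, (W.weak_cokernel hconf).1, Limits.comp_zero]
    · intro F' j' hj'
      exact (W.weak_cokernel hconf).2 j' (((hJ j').mp hj') i hIi)
  · intro h X
    obtain ⟨F, j, ⟨hJj, hpre⟩, T, k, hconf⟩ := h X
    refine ⟨T, k, ⟨?_, ?_⟩, ⟨F, j, hconf⟩⟩
    · rw [hI]
      intro B j' hj'
      obtain ⟨g, hg⟩ := hpre j' hj'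
      rw [← hg, ← Category.assoc, (W.weak_kernel hconf).1, Limits.zero_comp]
    · intro T' i' hi'
      exact (W.weak_kernel hconf).2 i' (((hI i').mp hi') j hJj)
end

section
/- Let I be a precovering ideal in a weak kernel-cokernel category such that every object X has an I-precover i: T→X admitting a weak cokernel j: X→F which is a weak deflation. Then j is a Hom-special ℓ(I)-preenvelope of X, and consequently (r(ℓ(I)), ℓ(I)) is a complete ideal torsion pair. -/
open CategoryTheory Limits ZeroObject

universe v u

variable {C : Type u} [Category.{v} C] [Preadditive C]

variable [HasZeroObject C] [HasBinaryBiproducts C]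

/-- If `I` is a precovering ideal such that every object `X` has an `I`-precover `i`
admitting a weak cokernel `j` which is a weak deflation, then each such `j` is a
Hom-special `ℓ(I)`-preenvelope of `X`, and `(r(ℓ(I)), ℓ(I))` is a complete ideal
torsion pair. -/
theorem stmt10 (W : WKCStruct C) (I : MorClass C) (hI : IsMorIdeal I)
    (h : ∀ X : C, ∃ (T : C) (i : T ⟶ X) (F : C) (j : X ⟶ F),
      IsPrecover I i ∧ IsWeakCokernel i j ∧ WeakDeflation W j) :
    (∀ ⦃T X F : C⦄ (i : T ⟶ X) (j : X ⟶ F),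
      IsPrecover I i → IsWeakCokernel i j → WeakDeflation W j →
        IsPreenvelope (leftAnn I) j) ∧
    CompleteITP W (rightAnn (leftAnn I)) (leftAnn I) := by
  have key : ∀ ⦃T X F : C⦄ (i : T ⟶ X) (j : X ⟶ F),
      IsPrecover I i → IsWeakCokernel i j → WeakDeflation W j →
        IsPreenvelope (leftAnn I) j := by
    intro T X F i j hpre hwc _
    constructor
    · intro A i' hi'
      obtain ⟨f, hf⟩ := hpre.2 i' hi'
      rw [← hf, Category.assoc, hwc.1, comp_zero]
    · intro F' j' hj'
      exact hwc.2 j' (hj' i hpre.1)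
  refine ⟨key, ⟨fun X Y f => Iff.rfl, ?_⟩, ?_, ?_⟩
  · intro X Y f
    constructor
    · intro hf A i hi
      exact hi f hf
    · intro hf A i hi
      exact hf i (fun B j hj => hj i hi)
  · intro X
    obtain ⟨T, i, F, j, hpre, hwc, hdef⟩ := h X
    obtain ⟨K, k, hconf⟩ := hdef
    refine ⟨K, k, ⟨?_, ?_⟩, F, j, hconf⟩
    · intro B j' hj'
      obtain ⟨t, ht⟩ := hwc.2 j' (hj' i hpre.1)
      rw [← ht, ← Category.assoc, (W.weak_kernel hconf).1, zero_comp]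
    · intro T' i' hi'
      exact (W.weak_kernel hconf).2 i'
        (hi' j (key i j hpre hwc ⟨K, k, hconf⟩).1)
  · intro X
    obtain ⟨T, i, F, j, hpre, hwc, hdef⟩ := h X
    exact ⟨F, j, key i j hpre hwc hdef, hdef⟩
end

section
/- In a weak exact category, every weak pullback of a weak deflation along an arbitrary morphism exists. More precisely, if c: Y→Z is a weak deflation and c': Y'→Z is any morphism, then the morphism (c',−c): Y'⊕Y → Z is again a weak deflation, and a weak kernel of it yields a weak pullback of c along c'. -/
open CategoryTheory Limits ZeroObject

universe v u

variable {C : Type u} [Category.{v} C] [Preadditive C]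

variable [HasZeroObject C] [HasBinaryBiproducts C]

/-- A weak pullback of `b : B ⟶ D` along `g : Cc ⟶ D`: a pair `(f : A ⟶ B, a : A ⟶ Cc)`
with `f ≫ b = a ≫ g` through which every other such pair factors (not necessarily
uniquely). -/
def IsWeakPullback {A B Cc D : C} (f : A ⟶ B) (a : A ⟶ Cc) (b : B ⟶ D) (g : Cc ⟶ D) :
    Prop :=
  f ≫ b = a ≫ g ∧ ∀ ⦃A' : C⦄ (f' : A' ⟶ B) (a' : A' ⟶ Cc), f' ≫ b = a' ≫ g →
    ∃ t : A' ⟶ A, t ≫ f = f' ∧ t ≫ a = a'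

/-- In a weak exact category, weak pullbacks of weak deflations along arbitrary morphisms
exist: if `c : Y ⟶ Z` is a weak deflation and `c' : Y' ⟶ Z` any morphism, then
`(c', −c) : Y' ⊞ Y ⟶ Z` is a weak deflation, any weak kernel of it yields a weak
pullback of `c` along `c'`, and such a weak pullback exists. -/
theorem stmt12 (W : WKCStruct C) (hW : IsWeakExact W)
    {Y Z Y' : C} (c : Y ⟶ Z) (hc : WeakDeflation W c) (c' : Y' ⟶ Z) :
    WeakDeflation W (biprod.desc c' (-c)) ∧
    (∀ (A : C) (θ : A ⟶ Y' ⊞ Y), IsWeakKernel θ (biprod.desc c' (-c)) →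
      IsWeakPullback (θ ≫ biprod.snd) (θ ≫ biprod.fst) c c') ∧
    (∃ (A : C) (f : A ⟶ Y) (a : A ⟶ Y'), IsWeakPullback f a c c') := by 
  -- Part 1: the deflation
  have hdefl : WeakDeflation W (biprod.desc c' (-c)) := by
    obtain ⟨K, k, hk⟩ := hc
    -- biprod.snd : Y' ⊞ Z ⟶ Z is part of a distinguished conflation
    have hsnd : W.conf (biprod.inl : Y' ⟶ Y' ⊞ Z) (biprod.snd : Y' ⊞ Z ⟶ Z) := by
      have h := W.conf_biprod (W.conf_id_zero Y') (W.conf_zero_id Z)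
      refine W.conf_iso (isoBiprodZero (isZero_zero C)).symm (Iso.refl _)
        (isoZeroBiprod (isZero_zero C)).symm h ?_ ?_
      · apply biprod.hom_ext' <;> simp
      · apply biprod.hom_ext' <;> simp
    -- the involution ψ = [[1, c'], [0, -1]] on Y' ⊞ Z
    have hinv : (biprod.lift biprod.fst (biprod.desc c' (-(𝟙 Z))) : Y' ⊞ Z ⟶ Y' ⊞ Z) ≫
        biprod.lift biprod.fst (biprod.desc c' (-(𝟙 Z))) = 𝟙 _ := by
      apply biprod.hom_ext' <;> apply biprod.hom_ext <;> simp
    let ψ : (Y' ⊞ Z) ≅ (Y' ⊞ Z) :=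
      ⟨biprod.lift biprod.fst (biprod.desc c' (-(𝟙 Z))),
       biprod.lift biprod.fst (biprod.desc c' (-(𝟙 Z))), hinv, hinv⟩
    -- ψ ≫ snd = biprod.desc c' (-𝟙 Z) is a deflation
    have hg2 : W.conf (biprod.inl ≫ ψ.hom) (biprod.desc c' (-(𝟙 Z)) : Y' ⊞ Z ⟶ Z) := by
      refine W.conf_iso (Iso.refl _) ψ (Iso.refl _) hsnd (by simp) ?_
      apply biprod.hom_ext' <;> simp [ψ]
    have hg1 : WeakDeflation W (biprod.map (𝟙 Y') c : Y' ⊞ Y ⟶ Y' ⊞ Z) :=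
      ⟨_, _, W.conf_biprod (W.conf_zero_id Y') hk⟩
    have hcomp := hW.defl_comp hg1 ⟨_, _, hg2⟩
    have heq : (biprod.map (𝟙 Y') c : Y' ⊞ Y ⟶ Y' ⊞ Z) ≫ biprod.desc c' (-(𝟙 Z)) =
        biprod.desc c' (-c) := by
      apply biprod.hom_ext' <;> simp
    rwa [heq] at hcomp
  -- Part 2: weak kernels give weak pullbacks
  have hwpb : ∀ (A : C) (θ : A ⟶ Y' ⊞ Y), IsWeakKernel θ (biprod.desc c' (-c)) →
      IsWeakPullback (θ ≫ biprod.snd) (θ ≫ biprod.fst) c c' := by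
    intro A θ ⟨hθ0, hθfac⟩
    constructor
    · have : θ ≫ biprod.desc c' (-c) = θ ≫ biprod.fst ≫ c' - θ ≫ biprod.snd ≫ c := by
        rw [biprod.desc_eq]
        simp [Preadditive.comp_add, sub_eq_add_neg]
      rw [this] at hθ0
      rw [Category.assoc, Category.assoc]
      linear_combination (norm := noncomm_ring) -hθ0
    · intro A' f' a' h
      obtain ⟨t, ht⟩ := hθfac (biprod.lift a' f') (by
        rw [biprod.lift_desc]
        simp [h])
      exact ⟨t, by simp [reassoc_of% ht], by simp [reassoc_of% ht]⟩
  refine ⟨hdefl, hwpb, ?_⟩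
  obtain ⟨K, k, hk⟩ := hdefl
  obtain ⟨h1, h2⟩ := hwpb K k (W.weak_kernel hk)
  exact ⟨K, k ≫ biprod.snd, k ≫ biprod.fst, h1, h2⟩
end

section
/- Let A be an abelian category (with its standard weak exact structure given by short exact sequences) and let I be a precovering ideal in A. Then the following are equivalent: (1) r(ℓ(I)) = I; (2) every object X of A has a monic I-cover; (3) the Hom-orthogonal pair (I, ℓ(I)) is a complete ideal torsion pair. -/
open CategoryTheory Limits ZeroObject

universe v u

variable {C : Type u} [Category.{v} C] [Preadditive C]

def Precovering (I : MorClass C) : Prop :=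
  ∀ X : C, ∃ (T : C) (i : T ⟶ X), IsPrecover I i

/-- A complete ideal torsion pair in an abelian category (with its standard weak exact
structure of short exact sequences): a mutually annihilating pair `(I, J)` such that every
object `X` fits in a short exact sequence `0 → T → X → F → 0` whose first map is an
`I`-precover and whose second map is a `J`-preenvelope. -/
def CompleteITPAb {A : Type u} [Category.{v} A] [Abelian A] (I J : MorClass A) : Prop :=
  IsIdealTorsionPair I J ∧
  ∀ X : A, ∃ (T F : A) (i : T ⟶ X) (j : X ⟶ F) (w : i ≫ j = 0),
    (ShortComplex.mk i j w).ShortExact ∧ IsPrecover I i ∧ IsPreenvelope J j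

/-- For a precovering ideal `I` in an abelian category, the following are equivalent:
(1) `r(ℓ(I)) = I`; (2) every object has a monic `I`-cover;
(3) `(I, ℓ(I))` is a complete ideal torsion pair. -/
theorem stmt16 {A : Type u} [Category.{v} A] [Abelian A]
    (I : MorClass A) (hI : IsMorIdeal I) (hpre : Precovering I) :
    ((∀ ⦃X Y : A⦄ (f : X ⟶ Y), rightAnn (leftAnn I) f ↔ I f) ↔
      (∀ X : A, ∃ (T : A) (i : T ⟶ X), IsCover I i ∧ Mono i)) ∧
    ((∀ X : A, ∃ (T : A) (i : T ⟶ X), IsCover I i ∧ Mono i) ↔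
      CompleteITPAb I (leftAnn I)) := by
  -- I ⊆ r(ℓ(I))
  have hIr : ∀ ⦃X Y : A⦄ (f : X ⟶ Y), I f → rightAnn (leftAnn I) f := by
    intro X Y f hf B j hj
    exact hj f hf
  -- (1) → (2)
  have h12 : (∀ ⦃X Y : A⦄ (f : X ⟶ Y), rightAnn (leftAnn I) f ↔ I f) →
      ∀ X : A, ∃ (T : A) (i : T ⟶ X), IsCover I i ∧ Mono i := by
    intro h1 X
    obtain ⟨T, i, hi, hfac⟩ := hpre X
    refine ⟨Abelian.image i, Abelian.image.ι i, ⟨⟨?_, ?_⟩, ?_⟩, inferInstance⟩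
    · refine (h1 _).1 ?_
      intro B j hj
      have h0 : i ≫ j = 0 := hj i hi
      have : Abelian.factorThruImage i ≫ Abelian.image.ι i ≫ j = 0 := by
        rw [← Category.assoc, Abelian.image.fac, h0]
      exact zero_of_epi_comp _ this
    · intro T' i' hi'
      obtain ⟨f, hf⟩ := hfac i' hi'
      refine ⟨f ≫ Abelian.factorThruImage i, ?_⟩
      rw [Category.assoc, Abelian.image.fac, hf]
    · intro f hf
      have : f = 𝟙 _ := by
        rw [← cancel_mono (Abelian.image.ι i), hf, Category.id_comp]
      rw [this]; infer_instance
  -- (2) → (1)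
  have h21 : (∀ X : A, ∃ (T : A) (i : T ⟶ X), IsCover I i ∧ Mono i) →
      ∀ ⦃X Y : A⦄ (f : X ⟶ Y), rightAnn (leftAnn I) f ↔ I f := by
    intro h2 X Y f
    refine ⟨?_, hIr f⟩
    intro hf
    obtain ⟨T, m, ⟨⟨hmI, hmfac⟩, _⟩, hmono⟩ := h2 Y
    have hc : leftAnn I (cokernel.π m) := by
      intro A' i hi
      obtain ⟨g, hg⟩ := hmfac i hi
      rw [← hg, Category.assoc, cokernel.condition, comp_zero]
    have h0 : f ≫ cokernel.π m = 0 := hf _ hc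
    have := Abelian.monoLift_comp m f h0
    rw [← this]
    exact hI.comp_mem_left _ hmI
  -- (2) → (3)
  have h23 : (∀ X : A, ∃ (T : A) (i : T ⟶ X), IsCover I i ∧ Mono i) →
      CompleteITPAb I (leftAnn I) := by
    intro h2
    constructor
    · exact ⟨fun X Y f => ⟨hIr f, fun h => (h21 h2 f).1 h⟩, fun X Y f => Iff.rfl⟩
    · intro X
      obtain ⟨T, m, ⟨⟨hmI, hmfac⟩, _⟩, hmono⟩ := h2 X
      refine ⟨T, cokernel m, m, cokernel.π m, cokernel.condition m, ?_, ⟨hmI, hmfac⟩, ?_, ?_⟩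
      · exact ⟨ShortComplex.exact_of_g_is_cokernel _ (cokernelIsCokernel m)⟩
      · intro A' i hi
        obtain ⟨g, hg⟩ := hmfac i hi
        rw [← hg, Category.assoc, cokernel.condition, comp_zero]
      · intro F' j' hj'
        have h0 : m ≫ j' = 0 := hj' m hmI
        exact ⟨cokernel.desc m j' h0, cokernel.π_desc m j' h0⟩
  -- (3) → (2)
  have h32 : CompleteITPAb I (leftAnn I) →
      ∀ X : A, ∃ (T : A) (i : T ⟶ X), IsCover I i ∧ Mono i := by
    intro ⟨_, hcompl⟩ X
    obtain ⟨T, F, i, j, w, hse, hprec, _⟩ := hcompl X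
    have : Mono i := hse.mono_f
    refine ⟨T, i, ⟨hprec, ?_⟩, this⟩
    intro f hf
    have : f = 𝟙 _ := by rw [← cancel_mono i, hf, Category.id_comp]
    rw [this]; infer_instance
  exact ⟨⟨h12, h21⟩, ⟨h23, fun h3 => h32 h3⟩⟩
end

section
/- Let A be an abelian category and t a preradical of A (a subfunctor of the identity with monic components ι_X: t(X)→X). Let I(t) be the ideal generated by the morphisms ι_X. Then a morphism f: X→Y belongs to I(t) if and only if f factors through ι_Y: t(Y)→Y; consequently, ι_X is an I(t)-cover of X for every object X, and (I(t), ℓ(I(t))) is a complete ideal torsion pair. -/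
open CategoryTheory Limits ZeroObject

universe v u

variable {C : Type u} [Category.{v} C] [Preadditive C]

/-- The class of components `ι_X : t(X) ⟶ X` of a preradical `(t, ι)`. -/
def preradicalComponents {A : Type u} [Category.{v} A] [Abelian A]
    (t : A ⥤ A) (ι : t ⟶ 𝟭 A) : MorClass A :=
  fun X Y f => ∃ (hX : X = t.obj Y), f = eqToHom hX ≫ ι.app Y

/-- For a preradical `t` of an abelian category (a subfunctor of the identity with monic
components `ι_X`), a morphism `f : X ⟶ Y` lies in the ideal `I(t)` generated by the `ι_X`
iff `f` factors through `ι_Y`; consequently each `ι_X` is an `I(t)`-cover of `X` and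
`(I(t), ℓ(I(t)))` is a complete ideal torsion pair. -/
theorem stmt17 {A : Type u} [Category.{v} A] [Abelian A]
    (t : A ⥤ A) [t.Additive] (ι : t ⟶ 𝟭 A) (hmono : ∀ X : A, Mono (ι.app X)) :
    (∀ ⦃X Y : A⦄ (f : X ⟶ Y), genBy (preradicalComponents t ι) f ↔
      ∃ g : X ⟶ t.obj Y, g ≫ ι.app Y = f) ∧
    (∀ X : A, IsCover (genBy (preradicalComponents t ι)) (ι.app X)) ∧
    CompleteITPAb (genBy (preradicalComponents t ι))
      (leftAnn (genBy (preradicalComponents t ι))) := by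
  -- The factoring class is an ideal
  have hJideal : IsMorIdeal (fun (X Y : A) (f : X ⟶ Y) => ∃ g : X ⟶ t.obj Y, g ≫ ι.app Y = f) := by
    constructor
    · intro X Y; exact ⟨0, by simp⟩
    · rintro X Y f g ⟨a, rfl⟩ ⟨b, rfl⟩; exact ⟨a + b, by simp [Preadditive.add_comp]⟩
    · rintro X Y Z f g ⟨a, rfl⟩; exact ⟨f ≫ a, by simp⟩
    · rintro X Y Z f g ⟨a, rfl⟩
      refine ⟨a ≫ t.map g, ?_⟩
      have := ι.naturality g
      simp only [Functor.id_map] at this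
      rw [Category.assoc, this, Category.assoc]
  -- key characterization of the generated ideal
  have key : ∀ ⦃X Y : A⦄ (f : X ⟶ Y), genBy (preradicalComponents t ι) f ↔
      ∃ g : X ⟶ t.obj Y, g ≫ ι.app Y = f := by
    intro X Y f
    constructor
    · intro hf
      refine hf _ hJideal ?_
      rintro A B g ⟨hX, rfl⟩
      exact ⟨eqToHom hX, rfl⟩
    · rintro ⟨g, rfl⟩
      intro I hI hS
      exact hI.comp_mem_left g (hS (ι.app Y) ⟨rfl, by simp⟩)
  have hIι : ∀ X : A, genBy (preradicalComponents t ι) (ι.app X) := fun X =>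
    (key (ι.app X)).2 ⟨𝟙 _, by simp⟩
  -- leftAnn characterization
  have hLA : ∀ ⦃B Y : A⦄ (j : B ⟶ Y),
      leftAnn (genBy (preradicalComponents t ι)) j ↔ ι.app B ≫ j = 0 := by
    intro B Y j
    constructor
    · intro h; exact h (ι.app B) (hIι B)
    · intro h A i hi
      obtain ⟨g, rfl⟩ := (key i).1 hi
      rw [Category.assoc, h, comp_zero]
  refine ⟨key, ?_, ?_⟩
  · -- ι.app X is a cover
    intro X
    refine ⟨⟨hIι X, ?_⟩, ?_⟩
    · intro T' i' hi'
      obtain ⟨g, hg⟩ := (key i').1 hi'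
      exact ⟨g, hg⟩
    · intro f hf
      have : f = 𝟙 _ := by
        have := hmono X
        rw [← cancel_mono (ι.app X), hf, Category.id_comp]
      rw [this]; infer_instance
  · constructor
    · constructor
      · -- I = rightAnn (leftAnn I)
        intro X Y f
        constructor
        · intro hf B j hj
          obtain ⟨g, rfl⟩ := (key f).1 hf
          rw [Category.assoc, (hLA j).1 hj, comp_zero]
        · intro h
          have hπ : leftAnn (genBy (preradicalComponents t ι)) (cokernel.π (ι.app Y)) :=
            (hLA _).2 (cokernel.condition _)
          have hf0 : f ≫ cokernel.π (ι.app Y) = 0 := h _ hπ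
          have := hmono Y
          obtain ⟨l, hl⟩ := KernelFork.IsLimit.lift'
            (Abelian.monoIsKernelOfCokernel _ (cokernelIsCokernel (ι.app Y))) f hf0
          exact (key f).2 ⟨l, hl⟩
      · intro X Y f; rfl
    · -- short exact sequences
      intro X
      have := hmono X
      refine ⟨t.obj X, cokernel (ι.app X), ι.app X, cokernel.π (ι.app X),
        cokernel.condition _, ?_, ?_, ?_⟩
      · refine ⟨?_⟩
        exact (ShortComplex.mk (ι.app X) (cokernel.π (ι.app X))
          (cokernel.condition _)).exact_of_g_is_cokernel
          (CokernelCofork.IsColimit.ofπ _ _ (fun h hw => cokernel.desc _ h hw)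
            (fun h hw => cokernel.π_desc _ _ _)
            (fun h hw m hm => by
              rw [← cancel_epi (cokernel.π (ι.app X)), hm, cokernel.π_desc]))
      · refine ⟨hIι X, ?_⟩
        intro T' i' hi'
        obtain ⟨g, hg⟩ := (key i').1 hi'
        exact ⟨g, hg⟩
      · refine ⟨(hLA _).2 (cokernel.condition _), ?_⟩
        intro F' j' hj'
        exact ⟨cokernel.desc _ j' ((hLA j').1 hj'), cokernel.π_desc _ _ _⟩
end

section
/- Let I be an image maximal ideal in an abelian category A: for every object X, the directed system of subobjects Im f, with f ∈ I ending in X, has a maximal element. Then the ideal r(ℓ(I)) is covering with monic covers; indeed, for each X, the inclusion ι: T → X of the maximal image T = Im f (f ∈ I(−,X)) is an r(ℓ(I))-cover of X, and (r(ℓ(I)), ℓ(I)) is a complete ideal torsion pair. -/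
open CategoryTheory Limits ZeroObject

universe v u

variable {C : Type u} [Category.{v} C] [Preadditive C]

/-- An ideal `I` is image maximal if for every object `X` the directed system of subobjects
`Im f`, with `f ∈ I` ending in `X`, has a maximal element. -/
def ImageMaximal {A : Type u} [Category.{v} A] [Abelian A] (I : MorClass A) : Prop :=
  ∀ X : A, ∃ (T : A) (f : T ⟶ X), I f ∧
    ∀ ⦃S : A⦄ (g : S ⟶ X), I g → imageSubobject g ≤ imageSubobject f

/-- For an image maximal ideal `I` in an abelian category: `r(ℓ(I))` is covering with
monic covers; for each `X` the inclusion of the maximal image `Im f` (`f ∈ I(−,X)`) is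
an `r(ℓ(I))`-cover of `X`; and `(r(ℓ(I)), ℓ(I))` is a complete ideal torsion pair. -/
theorem stmt18 {A : Type u} [Category.{v} A] [Abelian A]
    (I : MorClass A) (hI : IsMorIdeal I) (hmax : ImageMaximal I) :
    (∀ ⦃X T : A⦄ (f : T ⟶ X), I f →
      (∀ ⦃S : A⦄ (g : S ⟶ X), I g → imageSubobject g ≤ imageSubobject f) →
        IsCover (rightAnn (leftAnn I)) (imageSubobject f).arrow) ∧
    (∀ X : A, ∃ (T : A) (i : T ⟶ X), IsCover (rightAnn (leftAnn I)) i ∧ Mono i) ∧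
    CompleteITPAb (rightAnn (leftAnn I)) (leftAnn I) := by
  -- membership of the image inclusion in r(ℓ(I))
  have hmem : ∀ ⦃X T : A⦄ (f : T ⟶ X), I f →
      rightAnn (leftAnn I) (imageSubobject f).arrow := by
    intro X T f hf B j hj
    refine zero_of_epi_comp (factorThruImageSubobject f) ?_
    rw [← Category.assoc, imageSubobject_arrow_comp]
    exact hj f hf
  -- the cokernel projection of a maximal image lies in ℓ(I)
  have hpi : ∀ ⦃X T : A⦄ (f : T ⟶ X), I f →
      (∀ ⦃S : A⦄ (g : S ⟶ X), I g → imageSubobject g ≤ imageSubobject f) →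
      leftAnn I (cokernel.π (imageSubobject f).arrow) := by
    intro X T f hf hmaxf S g hg
    have hle := hmaxf g hg
    have hfac : g = factorThruImageSubobject g ≫
        (Subobject.ofLE _ _ hle ≫ (imageSubobject f).arrow) := by
      rw [Subobject.ofLE_arrow, imageSubobject_arrow_comp]
    rw [hfac, Category.assoc, Category.assoc, cokernel.condition, comp_zero, comp_zero]
  -- the cover statement
  have hcov : ∀ ⦃X T : A⦄ (f : T ⟶ X), I f →
      (∀ ⦃S : A⦄ (g : S ⟶ X), I g → imageSubobject g ≤ imageSubobject f) →
        IsCover (rightAnn (leftAnn I)) (imageSubobject f).arrow := by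
    intro X T f hf hmaxf
    refine ⟨⟨hmem f hf, ?_⟩, ?_⟩
    · intro T' i' hi'
      have h0 : i' ≫ cokernel.π (imageSubobject f).arrow = 0 := hi' _ (hpi f hf hmaxf)
      exact ⟨Abelian.monoLift _ i' h0, Abelian.monoLift_comp _ i' h0⟩
    · intro h hh
      have : h = 𝟙 _ := by rwa [← cancel_mono (imageSubobject f).arrow, Category.id_comp]
      rw [this]; infer_instance
  refine ⟨hcov, ?_, ⟨⟨fun X Y f => Iff.rfl, ?_⟩, ?_⟩⟩
  · intro X
    obtain ⟨T, f, hf, hmaxf⟩ := hmax X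
    exact ⟨_, _, hcov f hf hmaxf, inferInstance⟩
  · intro X Y f
    constructor
    · intro hf B i hi
      exact hi f hf
    · intro hf B i hi
      refine hf i ?_
      intro Z j hj
      exact hj i hi
  · intro X
    obtain ⟨T, f, hf, hmaxf⟩ := hmax X
    refine ⟨imageSubobject f, cokernel (imageSubobject f).arrow,
      (imageSubobject f).arrow, cokernel.π _, cokernel.condition _, ?_, (hcov f hf hmaxf).1, ?_⟩
    · refine ShortComplex.ShortExact.mk' ?_ inferInstance inferInstance
      exact ShortComplex.exact_of_f_is_kernel _
        (Abelian.monoIsKernelOfCokernel _ (colimit.isColimit _))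
    · refine ⟨hpi f hf hmaxf, ?_⟩
      intro F' j' hj'
      have h0 : (imageSubobject f).arrow ≫ j' = 0 := hmem f hf j' hj'
      exact ⟨cokernel.desc _ j' h0, cokernel.π_desc _ j' h0⟩
end

section
/- Let (A; E) be a Frobenius exact category and π: A → A̲ the stable quotient functor to the stable category. Let I be an ideal of A containing the projective-injective objects, and suppose π(I) is a precovering ideal in A̲. Then every object A of A has an I-precover that is a deflation: if π(i): π(T)→π(A) is a π(I)-precover with i ∈ I, and K → P --p--> A is a conflation with P projective, then the induced deflation (i,p): T ⊕ P → A is an I-precover of A. -/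
open CategoryTheory Limits ZeroObject

universe v u

variable {C : Type u} [Category.{v} C] [Preadditive C]

def IsKernelOf {X Y Z : C} (k : X ⟶ Y) (c : Y ⟶ Z) : Prop :=
  k ≫ c = 0 ∧ ∀ ⦃W : C⦄ (u : W ⟶ Y), u ≫ c = 0 → ∃! t : W ⟶ X, t ≫ k = u

def IsCokernelOf {X Y Z : C} (k : X ⟶ Y) (c : Y ⟶ Z) : Prop :=
  k ≫ c = 0 ∧ ∀ ⦃W : C⦄ (u : Y ⟶ W), k ≫ u = 0 → ∃! t : Z ⟶ W, c ≫ t = u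

variable (C) in
/-- A Quillen exact structure: a class of kernel-cokernel pairs ("conflations") closed
under isomorphism, containing the split conflations, with inflations and deflations
closed under composition, and with pullbacks of deflations and pushouts of inflations. -/
structure ExactStruct [HasZeroObject C] [HasBinaryBiproducts C] where
  conf : ∀ ⦃X Y Z : C⦄, (X ⟶ Y) → (Y ⟶ Z) → Prop
  ker : ∀ ⦃X Y Z : C⦄ ⦃k : X ⟶ Y⦄ ⦃c : Y ⟶ Z⦄, conf k c → IsKernelOf k c
  coker : ∀ ⦃X Y Z : C⦄ ⦃k : X ⟶ Y⦄ ⦃c : Y ⟶ Z⦄, conf k c → IsCokernelOf k c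
  conf_iso : ∀ ⦃X Y Z X' Y' Z' : C⦄ ⦃k : X ⟶ Y⦄ ⦃c : Y ⟶ Z⦄ ⦃k' : X' ⟶ Y'⦄ ⦃c' : Y' ⟶ Z'⦄
      (x : X ≅ X') (y : Y ≅ Y') (z : Z ≅ Z'), conf k c →
      k ≫ y.hom = x.hom ≫ k' → c ≫ z.hom = y.hom ≫ c' → conf k' c'
  conf_id_zero : ∀ X : C, conf (𝟙 X) (0 : X ⟶ 0)
  conf_zero_id : ∀ X : C, conf (0 : (0 : C) ⟶ X) (𝟙 X)
  infl_comp : ∀ ⦃X Y Z : C⦄ ⦃k : X ⟶ Y⦄ ⦃k' : Y ⟶ Z⦄,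
      (∃ (W : C) (c : Y ⟶ W), conf k c) → (∃ (W : C) (c : Z ⟶ W), conf k' c) →
      ∃ (W : C) (c : Z ⟶ W), conf (k ≫ k') c
  defl_comp : ∀ ⦃X Y Z : C⦄ ⦃c : X ⟶ Y⦄ ⦃c' : Y ⟶ Z⦄,
      (∃ (W : C) (k : W ⟶ X), conf k c) → (∃ (W : C) (k : W ⟶ Y), conf k c') →
      ∃ (W : C) (k : W ⟶ X), conf k (c ≫ c')
  pullback_defl : ∀ ⦃Y Z Y' : C⦄ ⦃c : Y ⟶ Z⦄, (∃ (X : C) (k : X ⟶ Y), conf k c) →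
      ∀ g : Y' ⟶ Z, ∃ (P : C) (g' : P ⟶ Y) (c'' : P ⟶ Y'),
        IsPullback g' c'' c g ∧ ∃ (X : C) (k : X ⟶ P), conf k c''
  pushout_infl : ∀ ⦃X Y X' : C⦄ ⦃k : X ⟶ Y⦄, (∃ (Z : C) (c : Y ⟶ Z), conf k c) →
      ∀ g : X ⟶ X', ∃ (Q : C) (g' : Y ⟶ Q) (k'' : X' ⟶ Q),
        IsPushout k g g' k'' ∧ ∃ (Z : C) (c : Q ⟶ Z), conf k'' c

variable [HasZeroObject C] [HasBinaryBiproducts C]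

def EDeflation (E : ExactStruct C) {Y Z : C} (c : Y ⟶ Z) : Prop :=
  ∃ (X : C) (k : X ⟶ Y), E.conf k c

def EInflation (E : ExactStruct C) {X Y : C} (k : X ⟶ Y) : Prop :=
  ∃ (Z : C) (c : Y ⟶ Z), E.conf k c

def EProjective (E : ExactStruct C) (P : C) : Prop :=
  ∀ ⦃Y Z : C⦄ (c : Y ⟶ Z), EDeflation E c → ∀ f : P ⟶ Z, ∃ g : P ⟶ Y, g ≫ c = f

def EInjective (E : ExactStruct C) (Q : C) : Prop :=
  ∀ ⦃X Y : C⦄ (k : X ⟶ Y), EInflation E k → ∀ f : X ⟶ Q, ∃ g : Y ⟶ Q, k ≫ g = f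

/-- `i' : T' ⟶ A` factors through `i` modulo a morphism factoring through an
`E`-projective, i.e. `π(i')` factors through `π(i)` in the stable category. -/
def StableFactors (E : ExactStruct C) {T T' A : C} (i : T ⟶ A) (i' : T' ⟶ A) : Prop :=
  ∃ (f : T' ⟶ T) (P : C) (u : T' ⟶ P) (v : P ⟶ A),
    EProjective E P ∧ i' = f ≫ i + u ≫ v

section Aux

variable {E : ExactStruct C}

/-- The split conflation `X → X ⊞ Y → Y` belongs to any exact structure. -/
lemma conf_inl_snd (E : ExactStruct C) (X Y : C) :
    E.conf (biprod.inl : X ⟶ X ⊞ Y) (biprod.snd : X ⊞ Y ⟶ Y) := by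
  -- pushout of the inflation `0 ⟶ Y` along `0 ⟶ X`
  have hinfl : ∃ (Z : C) (c : Y ⟶ Z), E.conf (0 : (0 : C) ⟶ Y) c :=
    ⟨Y, 𝟙 Y, E.conf_zero_id Y⟩
  obtain ⟨Q, g', k'', hpo, Z, c, hconf⟩ := E.pushout_infl hinfl (0 : (0 : C) ⟶ X)
  -- `Q` is a coproduct of `X` and `Y`; build the iso `Q ≅ X ⊞ Y`
  have hw : (0 : (0 : C) ⟶ Y) ≫ (biprod.inr : Y ⟶ X ⊞ Y)
      = (0 : (0 : C) ⟶ X) ≫ (biprod.inl : X ⟶ X ⊞ Y) := by simp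
  let yh : Q ⟶ X ⊞ Y := hpo.desc biprod.inr biprod.inl hw
  have hg' : g' ≫ yh = biprod.inr := hpo.inl_desc _ _ hw
  have hk'' : k'' ≫ yh = biprod.inl := hpo.inr_desc _ _ hw
  let yi : X ⊞ Y ⟶ Q := biprod.desc k'' g'
  have hyhi : yh ≫ yi = 𝟙 Q := by
    apply hpo.hom_ext
    · rw [reassoc_of% hg']; simp [yi]
    · rw [reassoc_of% hk'']; simp [yi]
  have hyih : yi ≫ yh = 𝟙 (X ⊞ Y) := by
    apply biprod.hom_ext' <;> simp [yi, hg', hk'']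
  let y : Q ≅ X ⊞ Y := ⟨yh, yi, hyhi, hyih⟩
  -- the cokernel `c` is isomorphic to `biprod.snd`
  have hcoker := E.coker hconf
  have h0 : k'' ≫ (yh ≫ biprod.snd) = 0 := by rw [reassoc_of% hk'']; simp
  obtain ⟨t, ht, -⟩ := hcoker.2 (yh ≫ biprod.snd) h0
  have hzinv : (g' ≫ c) ≫ t = 𝟙 Y := by
    rw [Category.assoc, ht, reassoc_of% hg']; simp
  have hsndg' : yh ≫ biprod.snd ≫ g' ≫ c = c := by
    have hsg : (biprod.snd ≫ g' : X ⊞ Y ⟶ Q) = yi - biprod.fst ≫ k'' := by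
      apply biprod.hom_ext' <;> simp [yi]
    rw [← Category.assoc, ← Category.assoc, Category.assoc yh, hsg]
    simp only [Preadditive.sub_comp, Preadditive.comp_sub, Category.assoc, hcoker.1,
      comp_zero, sub_zero]
    rw [← Category.assoc, hyhi, Category.id_comp]
  have hzhom : t ≫ (g' ≫ c) = 𝟙 Z := by
    obtain ⟨s, -, hsu⟩ := hcoker.2 c (by simp [hcoker.1])
    have h1 : c ≫ (t ≫ (g' ≫ c)) = c := by
      rw [← Category.assoc, ht, Category.assoc]; exact hsndg'
    rw [hsu _ h1, hsu (𝟙 Z) (by simp)]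
  let z : Z ≅ Y := ⟨t, g' ≫ c, hzhom, hzinv⟩
  exact E.conf_iso (Iso.refl X) y z hconf (by simpa [y] using hk'') (by simpa [y, z] using ht)

/-- The "shear" deflation `(f, 𝟙) : B ⊞ A ⟶ A` is part of a conflation. -/
lemma conf_shear (E : ExactStruct C) {B A : C} (f : B ⟶ A) :
    E.conf (biprod.lift (𝟙 B) (-f)) (biprod.desc f (𝟙 A)) := by
  let y : B ⊞ A ≅ B ⊞ A :=
    { hom := biprod.lift biprod.fst (biprod.snd - biprod.fst ≫ f)
      inv := biprod.lift biprod.fst (biprod.snd + biprod.fst ≫ f)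
      hom_inv_id := by apply biprod.hom_ext <;> simp
      inv_hom_id := by apply biprod.hom_ext <;> simp }
  refine E.conf_iso (Iso.refl B) y (Iso.refl A) (conf_inl_snd E B A) ?_ ?_
  · apply biprod.hom_ext <;> simp [y]
  · simp only [Iso.refl_hom, Category.comp_id]
    apply biprod.hom_ext' <;> simp [y]

/-- `T ⊞ P` with the obvious maps is a pullback of `p` along `biprod.snd`. -/
lemma biprod_isPullback {T P A : C} (p : P ⟶ A) :
    IsPullback (biprod.snd : T ⊞ P ⟶ P) (biprod.map (𝟙 T) p) p
      (biprod.snd : T ⊞ A ⟶ A) := by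
  refine IsPullback.of_isLimit' ⟨by simp⟩ ?_
  refine PullbackCone.IsLimit.mk _ (fun s => biprod.lift (s.snd ≫ biprod.fst) s.fst) ?_ ?_ ?_
  · intro s; simp
  · intro s
    apply biprod.hom_ext
    · simp
    · simpa using s.condition
  · intro s m hm₁ hm₂
    apply biprod.hom_ext
    · have := hm₂ =≫ biprod.fst
      simpa using this
    · simpa using hm₁

/-- `𝟙 T ⊞ p` is a deflation whenever `p` is. -/
lemma defl_biprod_map (E : ExactStruct C) {T P A : C} (p : P ⟶ A)
    (hp : EDeflation E p) : EDeflation E (biprod.map (𝟙 T) p) := by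
  obtain ⟨PB, g', c'', hpb, X0, k0, hconf⟩ :=
    E.pullback_defl hp (biprod.snd : T ⊞ A ⟶ A)
  let e : PB ≅ T ⊞ P := hpb.isoIsPullback _ _ (biprod_isPullback p)
  refine ⟨X0, k0 ≫ e.hom,
    E.conf_iso (Iso.refl X0) e (Iso.refl (T ⊞ A)) hconf (by simp) ?_⟩
  simpa [e] using (hpb.isoIsPullback_hom_snd _ _ (biprod_isPullback p)).symm

/-- If `p` is a deflation, then `(i, p) : T ⊞ P ⟶ A` is a deflation for any `i`. -/
lemma defl_biprod_desc (E : ExactStruct C) {T P A : C} (i : T ⟶ A) (p : P ⟶ A)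
    (hp : EDeflation E p) : EDeflation E (biprod.desc i p) := by
  have h1 : EDeflation E (biprod.map (𝟙 T) p) := defl_biprod_map E p hp
  have h2 : EDeflation E (biprod.desc i (𝟙 A)) := ⟨T, _, conf_shear E i⟩
  have hcomp : biprod.map (𝟙 T) p ≫ biprod.desc i (𝟙 A) = biprod.desc i p := by
    ext <;> simp
  rw [← hcomp]
  exact E.defl_comp h1 h2

end Aux

/-- In a Frobenius category, if an ideal `I` contains the projective(-injective) objects
and its image `π(I)` in the stable category is precovering, then every object has an
`I`-precover that is a deflation; precisely, given a stable `π(I)`-precover `π(i)` with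
`i ∈ I` and a conflation `K → P → A` with `P` projective, the deflation
`(i, p) : T ⊞ P ⟶ A` is an `I`-precover of `A`. -/
theorem stmt19 (E : ExactStruct C) (I : MorClass C) (hI : IsMorIdeal I)
    (hcont : ∀ P : C, EProjective E P → I (𝟙 P))
    (enough_proj : ∀ A : C, ∃ (K P : C) (k : K ⟶ P) (p : P ⟶ A),
      E.conf k p ∧ EProjective E P)
    (enough_inj : ∀ A : C, ∃ (Q Z : C) (k : A ⟶ Q) (c : Q ⟶ Z),
      E.conf k c ∧ EInjective E Q)
    (proj_eq_inj : ∀ P : C, EProjective E P ↔ EInjective E P)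
    (stable_precovering : ∀ A : C, ∃ (T : C) (i : T ⟶ A), I i ∧
      ∀ ⦃T' : C⦄ (i' : T' ⟶ A), I i' → StableFactors E i i') :
    (∀ (A : C), ∃ (T'' : C) (d : T'' ⟶ A), IsPrecover I d ∧ EDeflation E d) ∧
    (∀ ⦃A T : C⦄ (i : T ⟶ A), I i →
      (∀ ⦃T' : C⦄ (i' : T' ⟶ A), I i' → StableFactors E i i') →
      ∀ ⦃K P : C⦄ (k : K ⟶ P) (p : P ⟶ A), E.conf k p → EProjective E P →
        I (biprod.desc i p) ∧ EDeflation E (biprod.desc i p) ∧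
          IsPrecover I (biprod.desc i p)) := by
  have main : ∀ ⦃A T : C⦄ (i : T ⟶ A), I i →
      (∀ ⦃T' : C⦄ (i' : T' ⟶ A), I i' → StableFactors E i i') →
      ∀ ⦃K P : C⦄ (k : K ⟶ P) (p : P ⟶ A), E.conf k p → EProjective E P →
        I (biprod.desc i p) ∧ EDeflation E (biprod.desc i p) ∧
          IsPrecover I (biprod.desc i p) := by
    intro A T i hIi hfac K P k p hconf hP
    have hIp : I p := by
      have := hI.comp_mem_right p (hcont P hP)
      simpa using this
    have hdesc : (biprod.desc i p : T ⊞ P ⟶ A) = biprod.fst ≫ i + biprod.snd ≫ p := by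
      ext <;> simp
    have hmem : I (biprod.desc i p) := by
      rw [hdesc]
      exact hI.add_mem (hI.comp_mem_left _ hIi) (hI.comp_mem_left _ hIp)
    have hdefl : EDeflation E (biprod.desc i p) :=
      defl_biprod_desc E i p ⟨K, k, hconf⟩
    refine ⟨hmem, hdefl, hmem, ?_⟩
    intro T' i' hi'
    obtain ⟨f, P0, u, v, hP0, heq⟩ := hfac i' hi'
    obtain ⟨w, hw⟩ := hP0 (biprod.desc i p) hdefl v
    refine ⟨f ≫ biprod.inl + u ≫ w, ?_⟩
    rw [heq]
    simp [Preadditive.add_comp, Category.assoc, hw]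
  refine ⟨?_, main⟩
  intro A
  obtain ⟨T, i, hIi, hfac⟩ := stable_precovering A
  obtain ⟨K, P, k, p, hconf, hP⟩ := enough_proj A
  obtain ⟨h1, h2, h3⟩ := main i hIi hfac k p hconf hP
  exact ⟨T ⊞ P, biprod.desc i p, h3, h2⟩
end
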